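/- Let Ω ⊆ ℝⁿ be an open bounded set and let u : closure(Ω) → ℝ be a continuous function with u = 0 on ∂Ω and max_{closure(Ω)} u > 0. Fix ε > 0 and set ρ(ε) := 2√(ε·sup_Ω |u|). Then sup_{x ∈ Ω} u^ε(x) = max_{closure(Ω)} u, and for every x ∈ Ω with dist(x, ∂Ω) > ρ(ε) one has u^ε(x) = max_{closure(Ω)} u if and only if u(x) = max_{closure(Ω)} u. -/

import Mathlib

/-!
Since the penalty `‖x - y‖² / (2ε)` is nonnegative and vanishes at `y = x`, we have
`u ≤ u^ε ≤ max u` on `Ω`. The maximum of `u` is positive while `u = 0` on `∂Ω`, so it is attained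
at some `x₀ ∈ Ω`, where `u^ε(x₀) = max u`. Conversely, if `u^ε(x) = max u`, a maximiser `y₀` over
the compact set `closure Ω` of `y ↦ u y - ‖x - y‖² / (2ε)` satisfies
`max u ≤ u y₀ - ‖x - y₀‖² / (2ε) ≤ max u - ‖x - y₀‖² / (2ε)`, which forces `y₀ = x` and `u x = max u`.
-/

open Set Metric

/-- The sup-convolution `u^ε` of a function `u : Ω → ℝ`. -/
noncomputable def supConv {n : ℕ} (ε : ℝ) (Ω : Set (EuclideanSpace ℝ (Fin n)))
    (u : EuclideanSpace ℝ (Fin n) → ℝ) (x : EuclideanSpace ℝ (Fin n)) : ℝ :=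
  sSup ((fun y => u y - ‖x - y‖ ^ 2 / (2 * ε)) '' Ω)

/-- The radius `ρ(ε) = 2 √(ε ⬝ sup_Ω |u|)`. -/
noncomputable def rho {n : ℕ} (ε : ℝ) (Ω : Set (EuclideanSpace ℝ (Fin n)))
    (u : EuclideanSpace ℝ (Fin n) → ℝ) : ℝ :=
  2 * Real.sqrt (ε * sSup ((fun y => |u y|) '' Ω))

theorem exists_mem_apply_eq_sSup_of_frontier {X : Type*} [TopologicalSpace X] {Ω : Set X}
    (hΩ : IsOpen Ω) (hK : IsCompact (closure Ω)) {u : X → ℝ} (hu : ContinuousOn u (closure Ω))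
    (hu0 : ∀ x ∈ frontier Ω, u x = 0) (hpos : 0 < sSup (u '' closure Ω)) :
    ∃ x₀ ∈ Ω, sSup (u '' closure Ω) = u x₀ ∧ ∀ y ∈ closure Ω, u y ≤ u x₀ := by
  have hne : (closure Ω).Nonempty := by
    by_contra h
    simp [not_nonempty_iff_eq_empty.1 h] at hpos
  obtain ⟨x₀, hx₀, hmax, hge⟩ := hK.exists_sSup_image_eq_and_ge hne hu
  refine ⟨x₀, ?_, hmax, hge⟩
  by_contra hx
  have hfr : x₀ ∈ frontier Ω := ⟨hx₀, by rwa [hΩ.interior_eq]⟩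
  exact hpos.ne' (hmax.trans (hu0 x₀ hfr))

section SupConv

variable {n : ℕ} {ε M : ℝ} {Ω : Set (EuclideanSpace ℝ (Fin n))}
  {u : EuclideanSpace ℝ (Fin n) → ℝ} {x : EuclideanSpace ℝ (Fin n)}

theorem supConv_le (hε : 0 ≤ ε) (hΩ : Ω.Nonempty) (hM : ∀ y ∈ Ω, u y ≤ M) :
    supConv ε Ω u x ≤ M :=
  csSup_le (hΩ.image _) <| by
    rintro _ ⟨y, hy, rfl⟩
    exact (sub_le_self _ (by positivity)).trans (hM y hy)

theorem le_supConv (hε : 0 ≤ ε) (hM : ∀ y ∈ Ω, u y ≤ M) (hx : x ∈ Ω) :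
    u x ≤ supConv ε Ω u x := by
  refine le_csSup ⟨M, ?_⟩ ⟨x, hx, by simp⟩
  rintro _ ⟨y, hy, rfl⟩
  exact (sub_le_self _ (by positivity)).trans (hM y hy)

theorem apply_eq_of_supConv_eq (hε : 0 < ε) (hK : IsCompact (closure Ω)) (hΩ : Ω.Nonempty)
    (hu : ContinuousOn u (closure Ω)) (hM : ∀ y ∈ closure Ω, u y ≤ M)
    (hx : supConv ε Ω u x = M) : u x = M := by
  obtain ⟨y₀, hy₀, -, hy₀max⟩ := hK.exists_sSup_image_eq_and_ge hΩ.closure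
    (f := fun y => u y - ‖x - y‖ ^ 2 / (2 * ε)) (hu.sub (by fun_prop))
  have hMy₀ : M ≤ u y₀ - ‖x - y₀‖ ^ 2 / (2 * ε) :=
    hx ▸ csSup_le (hΩ.image _) (by rintro _ ⟨y, hy, rfl⟩; exact hy₀max y (subset_closure hy))
  have hpenalty : ‖x - y₀‖ ^ 2 / (2 * ε) ≤ 0 := by linarith [hM y₀ hy₀]
  have hxy₀ : x = y₀ := by
    have hsq : ‖x - y₀‖ ^ 2 ≤ 0 := by simpa using (div_le_iff₀ (by positivity)).1 hpenalty
    simpa [sub_eq_zero] using le_antisymm hsq (sq_nonneg _)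
  subst hxy₀
  exact le_antisymm (hM x hy₀) (by simpa using hMy₀)

theorem supConv_eq_iff (hε : 0 < ε) (hK : IsCompact (closure Ω))
    (hu : ContinuousOn u (closure Ω)) (hM : ∀ y ∈ closure Ω, u y ≤ M) (hx : x ∈ Ω) :
    supConv ε Ω u x = M ↔ u x = M := by
  have hMΩ : ∀ y ∈ Ω, u y ≤ M := fun y hy => hM y (subset_closure hy)
  refine ⟨apply_eq_of_supConv_eq hε hK ⟨x, hx⟩ hu hM, fun hux => ?_⟩
  exact le_antisymm (supConv_le hε.le ⟨x, hx⟩ hMΩ) (hux ▸ le_supConv hε.le hMΩ hx)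

end SupConv

theorem supConv_max
    {n : ℕ} (Ω : Set (EuclideanSpace ℝ (Fin n)))
    (hΩopen : IsOpen Ω) (hΩbdd : Bornology.IsBounded Ω)
    (u : EuclideanSpace ℝ (Fin n) → ℝ)
    (hu : ContinuousOn u (closure Ω))
    (hu0 : ∀ x ∈ frontier Ω, u x = 0)
    (hmaxpos : 0 < sSup (u '' closure Ω))
    (ε : ℝ) (hε : 0 < ε) :
    sSup (supConv ε Ω u '' Ω) = sSup (u '' closure Ω) ∧
    ∀ x ∈ Ω, rho ε Ω u < Metric.infDist x (frontier Ω) →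
      (supConv ε Ω u x = sSup (u '' closure Ω) ↔ u x = sSup (u '' closure Ω)) := by
  have hK : IsCompact (closure Ω) := hΩbdd.isCompact_closure
  obtain ⟨x₀, hx₀, hmax, hge⟩ :=
    exists_mem_apply_eq_sSup_of_frontier hΩopen hK hu hu0 hmaxpos
  rw [hmax]
  have hiff : ∀ x ∈ Ω, supConv ε Ω u x = u x₀ ↔ u x = u x₀ :=
    fun x hx => supConv_eq_iff hε hK hu hge hx
  refine ⟨IsGreatest.csSup_eq ⟨⟨x₀, hx₀, (hiff x₀ hx₀).2 rfl⟩, ?_⟩, fun x hx _ => hiff x hx⟩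
  rintro _ ⟨x, -, rfl⟩
  exact supConv_le hε.le ⟨x₀, hx₀⟩ fun y hy => hge y (subset_closure hy)
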